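/- Let (b_n)_{n≥2} be a complex sequence (with b_1 = 0) and C > 0 a constant such that for every square-summable complex sequence (a_n)_{n≥1}, ∑_{N≥2} (log N)^{-2} |∑_{d∣N, d≥2} b_d (log d) a_{N/d}|² ≤ C² ∑_{n≥1} |a_n|² (i.e. the Volterra operator T_g with symbol g(s)=∑_{n≥2} b_n n^{-s} is bounded on H² with norm at most C). Define the Dirichlet convolution powers by b^{(1)} = b and b^{(k+1)}_N = ∑_{d∣N} b^{(k)}_d b_{N/d}. Then for every positive integer k, ∑_{N≥1} |b^{(k)}_N|² ≤ (k!)² C^{2k}; that is, ‖g^k‖_{H²} ≤ k! ‖T_g‖^k. -/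

import Mathlib

open scoped ENNReal

/-- Dirichlet convolution powers: `convPow b k` is the coefficient sequence of `g^k`, where
`g` is the Dirichlet series with coefficients `b` (so `convPow b 0` is the unit `1`,
`convPow b 1 = b`, and `convPow b (k+1) N = ∑_{d∣N} b_d (convPow b k)_{N/d}`). -/
noncomputable def convPow (b : ℕ → ℂ) : ℕ → ℕ → ℂ
  | 0, N => if N = 1 then 1 else 0
  | k + 1, N => ∑ d ∈ N.divisors, convPow b k d * b (N / d)

/-! Taking coefficients, `-g'` is the pointwise product of `g` with `log`, and pointwise
multiplication by a completely additive function is a derivation of Dirichlet convolution. Hence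
`(g^(k+1))' = (k+1) g' g^k`, i.e. `g^(k+1) = (k+1) T_g(g^k)` (the coefficient at `1` vanishes
because `b 1 = 0`), so `‖g^(k+1)‖ ≤ (k+1) C ‖g^k‖`, and induction from `g^0 = 1` gives
`‖g^k‖ ≤ k! C^k`. -/

open ArithmeticFunction Finset

namespace ArithmeticFunction

variable {R : Type*} [CommSemiring R] {L : ArithmeticFunction R}

theorem pmul_mul_of_additive (hL : ∀ {m n}, m ≠ 0 → n ≠ 0 → L (m * n) = L m + L n)
    (f g : ArithmeticFunction R) :
    L.pmul (f * g) = L.pmul f * g + f * L.pmul g := by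
  ext n
  simp only [add_apply, pmul_apply, mul_apply, mul_sum, ← sum_add_distrib]
  refine sum_congr rfl fun p hp => ?_
  obtain ⟨h₁, h₂⟩ := Nat.ne_zero_of_mem_divisorsAntidiagonal hp
  rw [← (Nat.mem_divisorsAntidiagonal.mp hp).1, hL h₁ h₂]
  ring

theorem pmul_pow_succ_of_additive (hL : ∀ {m n}, m ≠ 0 → n ≠ 0 → L (m * n) = L m + L n)
    (f : ArithmeticFunction R) (k : ℕ) :
    L.pmul (f ^ (k + 1)) = (k + 1 : R) • (L.pmul f * f ^ k) := by
  induction k with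
  | zero => simp
  | succ k ih =>
    rw [pow_succ, pmul_mul_of_additive hL, ih, smul_mul_assoc, mul_assoc, ← pow_succ,
      mul_comm (f ^ (k + 1)), Nat.cast_succ, add_smul (k + 1 : R) 1, one_smul]

end ArithmeticFunction

noncomputable def complexLog : ArithmeticFunction ℂ := ⟨fun n => (Real.log n : ℂ), by simp⟩

theorem complexLog_apply (n : ℕ) : complexLog n = Real.log n := rfl

theorem complexLog_mul {m n : ℕ} (hm : m ≠ 0) (hn : n ≠ 0) :
    complexLog (m * n) = complexLog m + complexLog n := by
  simp only [complexLog_apply, Nat.cast_mul]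
  rw [Real.log_mul (by exact_mod_cast hm) (by exact_mod_cast hn)]
  push_cast
  rfl

theorem convPow_eq_pow (b : ℕ → ℂ) (k : ℕ) :
    convPow b k = ⇑(toArithmeticFunction b ^ k) := by
  induction k with
  | zero => ext n; simp [convPow, one_apply]
  | succ k ih =>
    ext n
    rw [convPow, pow_succ, mul_apply, ih, Nat.sum_divisorsAntidiagonal fun d e =>
      (toArithmeticFunction b ^ k) d * toArithmeticFunction b e]
    refine sum_congr rfl fun d hd => ?_
    have hnd : n / d ≠ 0 := (Nat.div_pos (Nat.divisor_le hd) (Nat.pos_of_mem_divisors hd)).ne'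
    simp [toArithmeticFunction, hnd]

theorem log_mul_convPow_succ (b : ℕ → ℂ) (k N : ℕ) :
    (Real.log N : ℂ) * convPow b (k + 1) N
      = (k + 1) * ∑ d ∈ N.divisors, b d * (Real.log d : ℂ) * convPow b k (N / d) := by
  have h := congrArg (· N) (pmul_pow_succ_of_additive complexLog_mul (toArithmeticFunction b) k)
  simp only [pmul_apply, smul_map, smul_eq_mul, mul_apply] at h
  rw [convPow_eq_pow, convPow_eq_pow, ← complexLog_apply, h,
    Nat.sum_divisorsAntidiagonal fun d e =>
      complexLog d * toArithmeticFunction b d * (toArithmeticFunction b ^ k) e]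
  refine congrArg _ (sum_congr rfl fun d hd => ?_)
  have hd0 : d ≠ 0 := (Nat.pos_of_mem_divisors hd).ne'
  simp only [toArithmeticFunction, coe_mk, if_neg hd0, complexLog_apply]
  ring

noncomputable def h2NormSq (a : ℕ → ℂ) : ℝ≥0∞ :=
  ∑' n : ℕ, if 1 ≤ n then ENNReal.ofReal (‖a n‖ ^ 2) else 0

/-- `volterraSum b a N = log N · (T_g f)_N` for `g = ∑ b_n n^{-s}` and `f = ∑ a_n n^{-s}`. -/
noncomputable def volterraSum (b a : ℕ → ℂ) (N : ℕ) : ℂ :=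
  ∑ d ∈ N.divisors.filter (fun d => 2 ≤ d), b d * (Real.log d : ℂ) * a (N / d)

noncomputable def volterraNormSq (b a : ℕ → ℂ) : ℝ≥0∞ :=
  ∑' N : ℕ, if 2 ≤ N then ENNReal.ofReal (‖volterraSum b a N‖ ^ 2 / Real.log N ^ 2) else 0

theorem volterraSum_eq_sum_divisors (b a : ℕ → ℂ) (N : ℕ) :
    volterraSum b a N = ∑ d ∈ N.divisors, b d * (Real.log d : ℂ) * a (N / d) := by
  refine sum_filter_of_ne fun d hd hne => ?_
  by_contra hd2
  obtain rfl : d = 1 := by have := Nat.pos_of_mem_divisors hd; omega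
  simp at hne

theorem h2NormSq_convPow_zero (b : ℕ → ℂ) : h2NormSq (convPow b 0) = 1 := by
  rw [h2NormSq, tsum_eq_single 1 fun n hn => by simp [convPow, hn]]
  simp [convPow]

theorem convPow_succ_one {b : ℕ → ℂ} (hb1 : b 1 = 0) (k : ℕ) : convPow b (k + 1) 1 = 0 := by
  simp [convPow, hb1]

theorem norm_convPow_succ_sq (b : ℕ → ℂ) (k : ℕ) {N : ℕ} (hN : 2 ≤ N) :
    ‖convPow b (k + 1) N‖ ^ 2
      = ((k : ℝ) + 1) ^ 2 * (‖volterraSum b (convPow b k) N‖ ^ 2 / Real.log N ^ 2) := by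
  have hlog : 0 < Real.log N := Real.log_pos (by exact_mod_cast hN)
  have hdiv :
      convPow b (k + 1) N = (k + 1) * volterraSum b (convPow b k) N / (Real.log N : ℂ) := by
    rw [eq_div_iff (Complex.ofReal_ne_zero.2 hlog.ne'), mul_comm, volterraSum_eq_sum_divisors,
      log_mul_convPow_succ]
  have hk : ‖(k : ℂ) + 1‖ = (k : ℝ) + 1 := by exact_mod_cast Complex.norm_natCast (k + 1)
  rw [hdiv, norm_div, norm_mul, Complex.norm_real, Real.norm_of_nonneg hlog.le, hk]
  ring

theorem h2NormSq_convPow_succ {b : ℕ → ℂ} (hb1 : b 1 = 0) (k : ℕ) :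
    h2NormSq (convPow b (k + 1)) = ((k : ℝ≥0∞) + 1) ^ 2 * volterraNormSq b (convPow b k) := by
  rw [h2NormSq, volterraNormSq, ← ENNReal.tsum_mul_left]
  refine tsum_congr fun N => ?_
  rcases Nat.lt_or_ge N 2 with hN | hN
  · interval_cases N <;> simp [convPow_succ_one hb1]
  · rw [if_pos (by omega), if_pos hN, norm_convPow_succ_sq b k hN,
      ENNReal.ofReal_mul (by positivity), ENNReal.ofReal_pow (by positivity)]
    norm_cast

theorem h2NormSq_convPow_le {b : ℕ → ℂ} {c : ℝ≥0∞} (hb1 : b 1 = 0)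
    (hbound : ∀ a, volterraNormSq b a ≤ c * h2NormSq a) (k : ℕ) :
    h2NormSq (convPow b k) ≤ (k.factorial : ℝ≥0∞) ^ 2 * c ^ k := by
  induction k with
  | zero => simp [h2NormSq_convPow_zero]
  | succ k ih =>
    calc h2NormSq (convPow b (k + 1))
        = ((k : ℝ≥0∞) + 1) ^ 2 * volterraNormSq b (convPow b k) := h2NormSq_convPow_succ hb1 k
      _ ≤ ((k : ℝ≥0∞) + 1) ^ 2 * (c * ((k.factorial : ℝ≥0∞) ^ 2 * c ^ k)) := by
        gcongr
        exact (hbound _).trans (by gcongr)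
      _ = ((k + 1).factorial : ℝ≥0∞) ^ 2 * c ^ (k + 1) := by
        rw [Nat.factorial_succ]
        push_cast
        ring

theorem power_trick_general (b : ℕ → ℂ) (hb1 : b 1 = 0) (C : ℝ)
    (hbound : ∀ a : ℕ → ℂ,
      (∑' N : ℕ, (if 2 ≤ N then
          ENNReal.ofReal
            (‖∑ d ∈ N.divisors.filter (fun d => 2 ≤ d),
                b d * (Real.log d : ℂ) * a (N / d)‖ ^ 2 / Real.log N ^ 2)
        else 0))
      ≤ ENNReal.ofReal (C ^ 2) *
          ∑' n : ℕ, (if 1 ≤ n then ENNReal.ofReal (‖a n‖ ^ 2) else 0)) :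
    ∀ k : ℕ, 1 ≤ k →
      (∑' N : ℕ, (if 1 ≤ N then ENNReal.ofReal (‖convPow b k N‖ ^ 2) else 0))
        ≤ ENNReal.ofReal ((k.factorial : ℝ) ^ 2 * C ^ (2 * k)) := by
  intro k _
  calc h2NormSq (convPow b k)
      ≤ (k.factorial : ℝ≥0∞) ^ 2 * ENNReal.ofReal (C ^ 2) ^ k :=
        h2NormSq_convPow_le hb1 hbound k
    _ = ENNReal.ofReal ((k.factorial : ℝ) ^ 2 * C ^ (2 * k)) := by
      rw [ENNReal.ofReal_mul (by positivity), pow_mul, ENNReal.ofReal_pow (sq_nonneg C),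
        ENNReal.ofReal_pow (Nat.cast_nonneg _), ENNReal.ofReal_natCast]

/-- if the Volterra operator with symbol `g(s) = ∑_{n≥2} b_n n^{-s}` is bounded
on `H²` with norm at most `C`, then for every positive integer `k`,
`‖g^k‖_{H²} ≤ k! ‖T_g‖^k`, i.e. `∑_{N≥1} |b^{(k)}_N|² ≤ (k!)² C^{2k}`. -/
theorem power_trick (b : ℕ → ℂ) (hb1 : b 1 = 0) (C : ℝ) (hC : 0 < C)
    (hbound : ∀ a : ℕ → ℂ,
      (∑' N : ℕ, (if 2 ≤ N then
          ENNReal.ofReal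
            (‖∑ d ∈ N.divisors.filter (fun d => 2 ≤ d),
                b d * (Real.log d : ℂ) * a (N / d)‖ ^ 2 / Real.log N ^ 2)
        else 0))
      ≤ ENNReal.ofReal (C ^ 2) *
          ∑' n : ℕ, (if 1 ≤ n then ENNReal.ofReal (‖a n‖ ^ 2) else 0)) :
    ∀ k : ℕ, 1 ≤ k →
      (∑' N : ℕ, (if 1 ≤ N then ENNReal.ofReal (‖convPow b k N‖ ^ 2) else 0))
        ≤ ENNReal.ofReal ((k.factorial : ℝ) ^ 2 * C ^ (2 * k)) :=
  power_trick_general b hb1 C hbound
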